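/- (Reidemeister III move on Gauss codes, first connectivity, preserves parity.) Let i, j, k be distinct labels and let G = P ++ [(i,u,+), (j,u,+)] ++ Q ++ [(i,o,+), (k,u,+)] ++ R ++ [(j,o,+), (k,o,+)] ++ S be a signed Gauss code in which the labels i, j, k occur only in the three displayed adjacent pairs. Let G' = P ++ [(j,u,+), (i,u,+)] ++ Q ++ [(k,u,+), (i,o,+)] ++ R ++ [(k,o,+), (j,o,+)] ++ S be obtained by swapping each of the three adjacent pairs. Then every crossing of G (including i, j, and k) has the same parity in G' as in G. -/

import Mathlib

/-- The marker recording whether an entry of a Gauss code lies on the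
understrand (`u`) or overstrand (`o`) of the crossing. -/
inductive Strand : Type
  | u : Strand
  | o : Strand
deriving DecidableEq

/-- The sign of a crossing. -/
inductive GSign : Type
  | pos : GSign
  | neg : GSign
deriving DecidableEq

/-- An entry `(ℓ, m, ε)` of a signed Gauss code: a label, a strand marker, and a sign.
A signed Gauss code is a `List (GaussEntry L)`. -/
abbrev GaussEntry (L : Type u) : Type u := L × Strand × GSign

/-- A label `ℓ` is a crossing of the signed Gauss code `G` if it occurs in exactly two
entries of `G`, once with marker `u` and once with marker `o`, both with the same sign. -/
def IsCrossing {L : Type u} [DecidableEq L] (G : List (GaussEntry L)) (ℓ : L) : Prop :=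
  G.countP (fun e => decide (e.1 = ℓ)) = 2 ∧
  ∃ ε : GSign, (ℓ, Strand.u, ε) ∈ G ∧ (ℓ, Strand.o, ε) ∈ G

/-- The number of entries of `G` lying strictly between the two occurrences of the
label `ℓ` (for `ℓ` occurring exactly twice in `G`). -/
def betweenCount {L : Type u} [DecidableEq L] (G : List (GaussEntry L)) (ℓ : L) : ℕ :=
  (G.drop (G.findIdx (fun e => decide (e.1 = ℓ)) + 1)).findIdx (fun e => decide (e.1 = ℓ))

/-- The parity of the crossing `ℓ` in `G`: the residue mod 2 of the number of entries of
`G` lying strictly between the two occurrences of `ℓ` (`0` = even, `1` = odd). -/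
def crossingParity {L : Type u} [DecidableEq L] (G : List (GaussEntry L)) (ℓ : L) : ℕ :=
  betweenCount G ℓ % 2


section Aux

variable {α : Type*}

private lemma my_findIdx_append_cons (p : α → Bool) (A : List α) (x : α) (B : List α)
    (hA : ∀ a ∈ A, p a = false) (hx : p x = true) :
    (A ++ x :: B).findIdx p = A.length := by
  induction A with
  | nil => simp [List.findIdx_cons, hx]
  | cons a A ih =>
    have ha : p a = false := hA a (by simp)
    simp only [List.cons_append, List.findIdx_cons, ha, cond_false, List.length_cons]
    rw [ih (fun a ha => hA a (by simp [ha]))]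

/-- `l'` is obtained from `l` by swapping some adjacent pairs of `p`-false elements. -/
private inductive SR (p : α → Bool) : List α → List α → Prop
  | nil : SR p [] []
  | cons (a : α) {l l' : List α} : SR p l l' → SR p (a :: l) (a :: l')
  | swap (x y : α) {l l' : List α} : p x = false → p y = false → SR p l l' →
      SR p (x :: y :: l) (y :: x :: l')

private lemma SR.refl (p : α → Bool) (l : List α) : SR p l l := by
  induction l with
  | nil => exact SR.nil
  | cons a l ih => exact SR.cons a ih

private lemma SR.append {p : α → Bool} {l₁ l₁' l₂ l₂' : List α}
    (h₁ : SR p l₁ l₁') (h₂ : SR p l₂ l₂') : SR p (l₁ ++ l₂) (l₁' ++ l₂') := by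
  induction h₁ with
  | nil => exact h₂
  | cons a _ ih => exact SR.cons a ih
  | swap x y hx hy _ ih => exact SR.swap x y hx hy ih

private lemma SR.findIdx_eq {p : α → Bool} {l l' : List α} (h : SR p l l') :
    l'.findIdx p = l.findIdx p := by
  induction h with
  | nil => rfl
  | cons a _ ih => simp [List.findIdx_cons, ih]
  | swap x y hx hy _ ih => simp [List.findIdx_cons, hx, hy, ih]

private lemma SR.bc_eq {p : α → Bool} {l l' : List α} (h : SR p l l') :
    (l'.drop (l'.findIdx p + 1)).findIdx p = (l.drop (l.findIdx p + 1)).findIdx p := by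
  induction h with
  | nil => rfl
  | @cons a l l' h ih =>
    cases hpa : p a with
    | true =>
      simp only [List.findIdx_cons, hpa, cond_true, List.drop_succ_cons, List.drop_zero]
      exact h.findIdx_eq
    | false =>
      simp only [List.findIdx_cons, hpa, cond_false, List.drop_succ_cons]
      exact ih
  | @swap x y l l' hx hy h ih =>
    simp only [List.findIdx_cons, hx, hy, cond_false, List.drop_succ_cons]
    exact ih

end Aux

private lemma betweenCount_decomp {L : Type*} [DecidableEq L]
    (A B C : List (GaussEntry L)) (ℓ : L) (x y : GaussEntry L)
    (hx : x.1 = ℓ) (hy : y.1 = ℓ)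
    (hA : ∀ e ∈ A, e.1 ≠ ℓ) (hB : ∀ e ∈ B, e.1 ≠ ℓ) :
    betweenCount (A ++ x :: B ++ y :: C) ℓ = B.length := by
  unfold betweenCount
  have h1 : (A ++ x :: B ++ y :: C) = A ++ x :: (B ++ y :: C) := by simp
  rw [h1, my_findIdx_append_cons _ A x _ (fun a ha => by simp [hA a ha]) (by simp [hx])]
  have h2 : A ++ x :: (B ++ y :: C) = (A ++ [x]) ++ (B ++ y :: C) := by simp
  have h3 : A.length + 1 = (A ++ [x]).length := by simp
  rw [h2, h3, List.drop_left]
  exact my_findIdx_append_cons _ B y C (fun a ha => by simp [hB a ha]) (by simp [hy])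


/-- (Reidemeister III on Gauss codes, first connectivity, preserves parity.)
Swapping the three adjacent pairs in
`G = P ++ [iᵤ⁺, jᵤ⁺] ++ Q ++ [iₒ⁺, kᵤ⁺] ++ R ++ [jₒ⁺, kₒ⁺] ++ S`
(with `i, j, k` distinct and occurring only in the displayed pairs) preserves the parity
of every crossing of `G`, including `i`, `j` and `k`. -/
theorem reidemeister_III_first_connectivity_preserves_parity {L : Type*} [DecidableEq L]
    (P Q R S : List (GaussEntry L)) (i j k : L)
    (hij : i ≠ j) (hik : i ≠ k) (hjk : j ≠ k)
    (hfresh : ∀ e ∈ P ++ Q ++ R ++ S, e.1 ≠ i ∧ e.1 ≠ j ∧ e.1 ≠ k)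
    (G G' : List (GaussEntry L))
    (hG : G = P ++ [(i, Strand.u, GSign.pos), (j, Strand.u, GSign.pos)] ++ Q
            ++ [(i, Strand.o, GSign.pos), (k, Strand.u, GSign.pos)] ++ R
            ++ [(j, Strand.o, GSign.pos), (k, Strand.o, GSign.pos)] ++ S)
    (hG' : G' = P ++ [(j, Strand.u, GSign.pos), (i, Strand.u, GSign.pos)] ++ Q
            ++ [(k, Strand.u, GSign.pos), (i, Strand.o, GSign.pos)] ++ R
            ++ [(k, Strand.o, GSign.pos), (j, Strand.o, GSign.pos)] ++ S) :
    (∀ ℓ : L, IsCrossing G ℓ → crossingParity G' ℓ = crossingParity G ℓ) ∧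
    crossingParity G' i = crossingParity G i ∧
    crossingParity G' j = crossingParity G j ∧
    crossingParity G' k = crossingParity G k := by
  have hP : ∀ e ∈ P, e.1 ≠ i ∧ e.1 ≠ j ∧ e.1 ≠ k := fun e he => hfresh e (by simp [he])
  have hQ : ∀ e ∈ Q, e.1 ≠ i ∧ e.1 ≠ j ∧ e.1 ≠ k := fun e he => hfresh e (by simp [he])
  have hR : ∀ e ∈ R, e.1 ≠ i ∧ e.1 ≠ j ∧ e.1 ≠ k := fun e he => hfresh e (by simp [he])
  have hS : ∀ e ∈ S, e.1 ≠ i ∧ e.1 ≠ j ∧ e.1 ≠ k := fun e he => hfresh e (by simp [he])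
  -- betweenCount of i
  have bGi : betweenCount G i = Q.length + 1 := by
    have hform : G = P ++ (i, Strand.u, GSign.pos) :: ((j, Strand.u, GSign.pos) :: Q)
        ++ (i, Strand.o, GSign.pos) :: ((k, Strand.u, GSign.pos) ::
          (R ++ [(j, Strand.o, GSign.pos), (k, Strand.o, GSign.pos)] ++ S)) := by
      rw [hG]; simp
    rw [hform, betweenCount_decomp P ((j, Strand.u, GSign.pos) :: Q)
      ((k, Strand.u, GSign.pos) ::
        (R ++ [(j, Strand.o, GSign.pos), (k, Strand.o, GSign.pos)] ++ S)) i
      (i, Strand.u, GSign.pos) (i, Strand.o, GSign.pos) rfl rfl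
      (fun e he => (hP e he).1)
      (by rintro e he
          rcases List.mem_cons.mp he with rfl | he
          · exact fun h => hij h.symm
          · exact (hQ e he).1)]
    simp
  have bG'i : betweenCount G' i = Q.length + 1 := by
    have hform : G' = (P ++ [(j, Strand.u, GSign.pos)]) ++ (i, Strand.u, GSign.pos) ::
        (Q ++ [(k, Strand.u, GSign.pos)]) ++ (i, Strand.o, GSign.pos) ::
          (R ++ [(k, Strand.o, GSign.pos), (j, Strand.o, GSign.pos)] ++ S) := by
      rw [hG']; simp
    rw [hform, betweenCount_decomp (P ++ [(j, Strand.u, GSign.pos)])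
      (Q ++ [(k, Strand.u, GSign.pos)])
      (R ++ [(k, Strand.o, GSign.pos), (j, Strand.o, GSign.pos)] ++ S) i
      (i, Strand.u, GSign.pos) (i, Strand.o, GSign.pos) rfl rfl
      (by rintro e he
          rcases List.mem_append.mp he with he | he
          · exact (hP e he).1
          · rcases List.mem_singleton.mp he with rfl
            exact fun h => hij h.symm)
      (by rintro e he
          rcases List.mem_append.mp he with he | he
          · exact (hQ e he).1
          · rcases List.mem_singleton.mp he with rfl
            exact fun h => hik h.symm)]
    simp
  -- betweenCount of j
  have bGj : betweenCount G j = Q.length + R.length + 2 := by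
    have hform : G = (P ++ [(i, Strand.u, GSign.pos)]) ++ (j, Strand.u, GSign.pos) ::
        (Q ++ (i, Strand.o, GSign.pos) :: (k, Strand.u, GSign.pos) :: R) ++
          (j, Strand.o, GSign.pos) :: ((k, Strand.o, GSign.pos) :: S) := by
      rw [hG]; simp
    rw [hform, betweenCount_decomp (P ++ [(i, Strand.u, GSign.pos)])
      (Q ++ (i, Strand.o, GSign.pos) :: (k, Strand.u, GSign.pos) :: R)
      ((k, Strand.o, GSign.pos) :: S) j
      (j, Strand.u, GSign.pos) (j, Strand.o, GSign.pos) rfl rfl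
      (by rintro e he
          rcases List.mem_append.mp he with he | he
          · exact (hP e he).2.1
          · rcases List.mem_singleton.mp he with rfl
            exact hij)
      (by rintro e he
          rcases List.mem_append.mp he with he | he
          · exact (hQ e he).2.1
          · rcases List.mem_cons.mp he with rfl | he
            · exact hij
            · rcases List.mem_cons.mp he with rfl | he
              · exact fun h => hjk h.symm
              · exact (hR e he).2.1)]
    simp; omega
  have bG'j : betweenCount G' j = Q.length + R.length + 4 := by
    have hform : G' = P ++ (j, Strand.u, GSign.pos) ::
        ((i, Strand.u, GSign.pos) :: Q ++ (k, Strand.u, GSign.pos) ::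
            ((i, Strand.o, GSign.pos) :: R) ++ [(k, Strand.o, GSign.pos)]) ++
          (j, Strand.o, GSign.pos) :: S := by
      rw [hG']; simp
    rw [hform, betweenCount_decomp P
      ((i, Strand.u, GSign.pos) :: Q ++ (k, Strand.u, GSign.pos) ::
        ((i, Strand.o, GSign.pos) :: R) ++ [(k, Strand.o, GSign.pos)])
      S j (j, Strand.u, GSign.pos) (j, Strand.o, GSign.pos) rfl rfl
      (fun e he => (hP e he).2.1)
      (by rintro e he
          rcases List.mem_append.mp he with he | he
          · rcases List.mem_append.mp he with he | he
            · rcases List.mem_cons.mp he with rfl | he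
              · exact hij
              · exact (hQ e he).2.1
            · rcases List.mem_cons.mp he with rfl | he
              · exact fun h => hjk h.symm
              · rcases List.mem_cons.mp he with rfl | he
                · exact hij
                · exact (hR e he).2.1
          · rcases List.mem_singleton.mp he with rfl
            exact fun h => hjk h.symm)]
    simp; omega
  -- betweenCount of k
  have bGk : betweenCount G k = R.length + 1 := by
    have hform : G = (P ++ [(i, Strand.u, GSign.pos), (j, Strand.u, GSign.pos)] ++ Q
          ++ [(i, Strand.o, GSign.pos)]) ++ (k, Strand.u, GSign.pos) ::
        (R ++ [(j, Strand.o, GSign.pos)]) ++ (k, Strand.o, GSign.pos) :: S := by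
      rw [hG]; simp
    rw [hform, betweenCount_decomp
      (P ++ [(i, Strand.u, GSign.pos), (j, Strand.u, GSign.pos)] ++ Q
        ++ [(i, Strand.o, GSign.pos)])
      (R ++ [(j, Strand.o, GSign.pos)]) S k
      (k, Strand.u, GSign.pos) (k, Strand.o, GSign.pos) rfl rfl
      (by rintro e he
          rcases List.mem_append.mp he with he | he
          · rcases List.mem_append.mp he with he | he
            · rcases List.mem_append.mp he with he | he
              · exact (hP e he).2.2
              · rcases List.mem_cons.mp he with rfl | he
                · exact hik
                · rcases List.mem_cons.mp he with rfl | he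
                  · exact hjk
                  · exact absurd he List.not_mem_nil
            · exact (hQ e he).2.2
          · rcases List.mem_singleton.mp he with rfl
            exact hik)
      (by rintro e he
          rcases List.mem_append.mp he with he | he
          · exact (hR e he).2.2
          · rcases List.mem_singleton.mp he with rfl
            exact hjk)]
    simp
  have bG'k : betweenCount G' k = R.length + 1 := by
    have hform : G' = (P ++ [(j, Strand.u, GSign.pos), (i, Strand.u, GSign.pos)] ++ Q)
        ++ (k, Strand.u, GSign.pos) :: ((i, Strand.o, GSign.pos) :: R)
        ++ (k, Strand.o, GSign.pos) :: ((j, Strand.o, GSign.pos) :: S) := by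
      rw [hG']; simp
    rw [hform, betweenCount_decomp
      (P ++ [(j, Strand.u, GSign.pos), (i, Strand.u, GSign.pos)] ++ Q)
      ((i, Strand.o, GSign.pos) :: R) ((j, Strand.o, GSign.pos) :: S) k
      (k, Strand.u, GSign.pos) (k, Strand.o, GSign.pos) rfl rfl
      (by rintro e he
          rcases List.mem_append.mp he with he | he
          · rcases List.mem_append.mp he with he | he
            · exact (hP e he).2.2
            · rcases List.mem_cons.mp he with rfl | he
              · exact hjk
              · rcases List.mem_cons.mp he with rfl | he
                · exact hik
                · exact absurd he List.not_mem_nil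
          · exact (hQ e he).2.2)
      (by rintro e he
          rcases List.mem_cons.mp he with rfl | he
          · exact hik
          · exact (hR e he).2.2)]
    simp
  have hi : crossingParity G' i = crossingParity G i := by
    unfold crossingParity; rw [bGi, bG'i]
  have hj : crossingParity G' j = crossingParity G j := by
    unfold crossingParity; rw [bGj, bG'j]; omega
  have hk : crossingParity G' k = crossingParity G k := by
    unfold crossingParity; rw [bGk, bG'k]
  refine ⟨?_, hi, hj, hk⟩
  intro ℓ _
  by_cases hℓi : ℓ = i
  · subst hℓi; exact hi
  by_cases hℓj : ℓ = j
  · subst hℓj; exact hj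
  by_cases hℓk : ℓ = k
  · subst hℓk; exact hk
  -- fresh label: G and G' are related by SR
  have hsr : SR (fun e : GaussEntry L => decide (e.1 = ℓ)) G G' := by
    rw [hG, hG']
    have fi : (fun e : GaussEntry L => decide (e.1 = ℓ)) (i, Strand.u, GSign.pos) = false := by
      simp only [decide_eq_false_iff_not]; exact fun h => hℓi h.symm
    have fi' : (fun e : GaussEntry L => decide (e.1 = ℓ)) (i, Strand.o, GSign.pos) = false := by
      simp only [decide_eq_false_iff_not]; exact fun h => hℓi h.symm
    have fj : (fun e : GaussEntry L => decide (e.1 = ℓ)) (j, Strand.u, GSign.pos) = false := by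
      simp only [decide_eq_false_iff_not]; exact fun h => hℓj h.symm
    have fj' : (fun e : GaussEntry L => decide (e.1 = ℓ)) (j, Strand.o, GSign.pos) = false := by
      simp only [decide_eq_false_iff_not]; exact fun h => hℓj h.symm
    have fk : (fun e : GaussEntry L => decide (e.1 = ℓ)) (k, Strand.u, GSign.pos) = false := by
      simp only [decide_eq_false_iff_not]; exact fun h => hℓk h.symm
    have fk' : (fun e : GaussEntry L => decide (e.1 = ℓ)) (k, Strand.o, GSign.pos) = false := by
      simp only [decide_eq_false_iff_not]; exact fun h => hℓk h.symm
    have h1 : P ++ [(i, Strand.u, GSign.pos), (j, Strand.u, GSign.pos)] ++ Q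
            ++ [(i, Strand.o, GSign.pos), (k, Strand.u, GSign.pos)] ++ R
            ++ [(j, Strand.o, GSign.pos), (k, Strand.o, GSign.pos)] ++ S
        = P ++ ((i, Strand.u, GSign.pos) :: (j, Strand.u, GSign.pos) ::
            (Q ++ ((i, Strand.o, GSign.pos) :: (k, Strand.u, GSign.pos) ::
              (R ++ ((j, Strand.o, GSign.pos) :: (k, Strand.o, GSign.pos) :: S))))) := by
      simp
    have h2 : P ++ [(j, Strand.u, GSign.pos), (i, Strand.u, GSign.pos)] ++ Q
            ++ [(k, Strand.u, GSign.pos), (i, Strand.o, GSign.pos)] ++ R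
            ++ [(k, Strand.o, GSign.pos), (j, Strand.o, GSign.pos)] ++ S
        = P ++ ((j, Strand.u, GSign.pos) :: (i, Strand.u, GSign.pos) ::
            (Q ++ ((k, Strand.u, GSign.pos) :: (i, Strand.o, GSign.pos) ::
              (R ++ ((k, Strand.o, GSign.pos) :: (j, Strand.o, GSign.pos) :: S))))) := by
      simp
    rw [h1, h2]
    exact SR.append (SR.refl _ P)
      (SR.swap _ _ fi fj (SR.append (SR.refl _ Q)
        (SR.swap _ _ fi' fk (SR.append (SR.refl _ R)
          (SR.swap _ _ fj' fk' (SR.refl _ S))))))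
  unfold crossingParity betweenCount
  rw [hsr.bc_eq]
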